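/- Let n ≥ m+2 and H a graph. If γ_gr(H) ≥ m+1 then γ_gr(P_n^m ∘ H) = ⌈n/(m+1)⌉·(γ_gr(H) − (m+1)) + n + m, and if γ_gr(H) ≤ m then γ_gr(P_n^m ∘ H) = 2γ_gr(H) + n − m − 2. -/

import Mathlib

namespace GrundyDom

/-- Closed neighborhood N[v]. -/
def cn {V : Type*} (G : SimpleGraph V) (v : V) : Set V := insert v (G.neighborSet v)

/-- Union of closed neighborhoods of the vertices of a list. -/
def cnUnion {V : Type*} (G : SimpleGraph V) (L : List V) : Set V := ⋃ v ∈ L, cn G v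

/-- Private neighborhood of `v` with respect to the first `i` entries of `S`:
`N[v] \ (N[v_1] ∪ ... ∪ N[v_i])`. -/
def PN {V : Type*} (G : SimpleGraph V) (S : List V) (i : ℕ) (v : V) : Set V :=
  cn G v \ cnUnion G (S.take i)

/-- A legal dominating sequence: distinct vertices, dominating set, and every
vertex of the sequence has a nonempty private neighborhood w.r.t. its predecessors. -/
structure IsLegal {V : Type*} (G : SimpleGraph V) (S : List V) : Prop where
  nodup : S.Nodup
  dominates : ∀ v : V, ∃ u ∈ S, v ∈ cn G u
  legal : ∀ i : Fin S.length, (PN G S i.val (S.get i)).Nonempty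

/-- The set `I_S` of vertices that footprint themselves in `S`. -/
def selfFoot {V : Type*} (G : SimpleGraph V) (S : List V) : Set V :=
  {v | ∃ i : Fin S.length, S.get i = v ∧ v ∈ PN G S i.val v}

/-- Grundy domination number: maximum length of a legal dominating sequence. -/
noncomputable def gammaGr {V : Type*} (G : SimpleGraph V) : ℕ :=
  sSup {k | ∃ S : List V, IsLegal G S ∧ S.length = k}

/-- `γ_gr(G, I)`: maximum length of a legal dominating sequence `S` with `I_S = I`. -/
noncomputable def gammaGrOn {V : Type*} (G : SimpleGraph V) (I : Set V) : ℕ :=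
  sSup {k | ∃ S : List V, IsLegal G S ∧ selfFoot G S = I ∧ S.length = k}

/-- `γ_gr^u(G)`: maximum of `γ_gr(G, I)` over independent sets `I` containing `u`. -/
noncomputable def gammaGrVert {V : Type*} (G : SimpleGraph V) (u : V) : ℕ :=
  sSup {k | ∃ I : Set V, (∀ ⦃a⦄, a ∈ I → ∀ ⦃b⦄, b ∈ I → a ≠ b → ¬ G.Adj a b) ∧
    u ∈ I ∧ k = gammaGrOn G I}

/-- Independent set of a graph. -/
def IsIndep {V : Type*} (G : SimpleGraph V) (I : Set V) : Prop :=
  ∀ ⦃u⦄, u ∈ I → ∀ ⦃v⦄, v ∈ I → u ≠ v → ¬ G.Adj u v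

/-- The X-join product `G ↩ 𝓡`: replace each vertex `v` of `G` by the graph `R v`. -/
def XJoin {V : Type*} (G : SimpleGraph V) {W : V → Type*} (R : ∀ v, SimpleGraph (W v)) :
    SimpleGraph (Σ v, W v) where
  Adj x y := G.Adj x.1 y.1 ∨ ∃ h : x.1 = y.1, (R y.1).Adj (h ▸ x.2) y.2
  symm := ⟨by
    rintro ⟨a, xa⟩ ⟨b, yb⟩ (h | ⟨h, hadj⟩)
    · exact Or.inl h.symm
    · dsimp at h hadj
      subst h
      exact Or.inr ⟨rfl, (R a).symm.symm _ _ hadj⟩⟩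
  loopless := ⟨by
    rintro ⟨a, xa⟩ (h | ⟨h, hadj⟩)
    · exact G.loopless.irrefl a h
    · exact (R a).loopless.irrefl xa hadj⟩

/-- The lexicographic product `G ∘ H`. -/
def Lex {V W : Type*} (G : SimpleGraph V) (H : SimpleGraph W) : SimpleGraph (V × W) where
  Adj x y := G.Adj x.1 y.1 ∨ (x.1 = y.1 ∧ H.Adj x.2 y.2)
  symm := ⟨by
    rintro x y (h | ⟨h1, h2⟩)
    · exact Or.inl h.symm
    · exact Or.inr ⟨h1.symm, h2.symm⟩⟩
  loopless := ⟨by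
    rintro x (h | ⟨_, h⟩)
    · exact G.loopless.irrefl _ h
    · exact H.loopless.irrefl _ h⟩

/-- The replacement graph `G_{u ↩ H}`: replace the vertex `u` of `G` by `H`. -/
def Replace {V : Type*} (G : SimpleGraph V) (u : V) {W : Type*} (H : SimpleGraph W) :
    SimpleGraph ({v : V // v ≠ u} ⊕ W) where
  Adj x y :=
    match x, y with
    | Sum.inl a, Sum.inl b => G.Adj a.1 b.1
    | Sum.inl a, Sum.inr _ => G.Adj a.1 u
    | Sum.inr _, Sum.inl b => G.Adj u b.1
    | Sum.inr h1, Sum.inr h2 => H.Adj h1 h2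
  symm := ⟨by rintro (a|a) (b|b) h <;> exact h.symm⟩
  loopless := ⟨by rintro (a|a) h <;> exact h.ne rfl⟩

/-- `C_n^m`: the m-th power of the n-cycle, on vertex set `ZMod n`;
two vertices are adjacent iff their circular distance is between 1 and m. -/
def cyclePow (n m : ℕ) : SimpleGraph (ZMod n) where
  Adj i j := i ≠ j ∧ ∃ k : ℕ, 1 ≤ k ∧ k ≤ m ∧ (j = i + k ∨ i = j + k)
  symm := ⟨by
    rintro i j ⟨hne, k, h1, h2, h3⟩
    exact ⟨hne.symm, k, h1, h2, h3.symm⟩⟩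
  loopless := ⟨fun i h => h.1 rfl⟩

/-- `P_n^m`: the m-th power of the n-path, on vertex set `Fin n`
(vertex `i` represents the `(i+1)`-st vertex of the path);
two vertices adjacent iff their distance is between 1 and m. -/
def pathPow (n m : ℕ) : SimpleGraph (Fin n) where
  Adj i j := i ≠ j ∧ Nat.dist i.val j.val ≤ m
  symm := ⟨by
    rintro i j ⟨hne, hd⟩
    exact ⟨hne.symm, by rwa [Nat.dist_comm]⟩⟩
  loopless := ⟨fun i h => h.1 rfl⟩

end GrundyDom

/-!
Lower bound. A Grundy sequence of `H` placed in column `0`, followed by a Grundy sequence of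
`P_{n'}^m ∘ H` shifted to the columns beyond the closed neighbourhood of column `0`, is legal; so
`γ_gr(H) + γ_gr(P_{n'}^m ∘ H) ≤ γ_gr(P_{n'+m+1}^m ∘ H)`. This reduces the first formula to
`n ≤ 2m + 2`, where it agrees with the second one, and `2 γ_gr(H) + n - m - 2` is realised by a
Grundy sequence of `H` in column `0`, one vertex in each of the columns `1, …, n - m - 2`, a
Grundy sequence of `H` without its last vertex in column `n - 1`, and finally a vertex of
column `n - 2`, which footprints what that last vertex footprinted.

Upper bound. Let `S` be a legal dominating sequence. A pick is inner if it footprints a vertex of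
its own column, and it enters a column `j` other than its own if it footprints a vertex of
column `j`; then it dominates all of column `j`, so each column is entered at most once. The inner
picks of a column form a legal sequence of `H`, which is not dominating if the column is entered,
and the remaining picks inject into the entered columns whose entering pick is not inner. With `D`
the columns containing an inner pick and `A` the columns entered by an inner pick this gives
`|S| + |D| + |A| ≤ γ_gr(H) |D| + n`. Two inner picks never lie in adjacent columns, so
`|D| (m + 1) ≤ n + m`. The first pick entering one of the columns strictly between two consecutive
columns of `D` is an inner pick lying in one of these two columns, so the `m` columns next to it
on that side lie in `A`; hence `|A| ≥ (|D| - 1) m`, and similarly `|A| ≥ m`.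
-/

open Finset

namespace GrundyDom

section Legal

variable {V : Type*} (G : SimpleGraph V)

theorem mem_cn_iff {u v : V} : u ∈ cn G v ↔ u = v ∨ G.Adj v u := Iff.rfl

theorem mem_cn_self (v : V) : v ∈ cn G v := Set.mem_insert _ _

theorem mem_cnUnion {L : List V} {x : V} : x ∈ cnUnion G L ↔ ∃ v ∈ L, x ∈ cn G v := by
  simp [cnUnion]

@[simp] theorem cnUnion_nil : cnUnion G [] = ∅ := by simp [cnUnion]

@[simp] theorem cnUnion_cons (v : V) (L : List V) :
    cnUnion G (v :: L) = cn G v ∪ cnUnion G L := by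
  simp [cnUnion]

@[simp] theorem cnUnion_append (L₁ L₂ : List V) :
    cnUnion G (L₁ ++ L₂) = cnUnion G L₁ ∪ cnUnion G L₂ := by
  simp [cnUnion, Set.iUnion_or, Set.iUnion_union_distrib]

theorem cnUnion_subset {L : List V} {X : Set V} (h : ∀ v ∈ L, cn G v ⊆ X) : cnUnion G L ⊆ X :=
  Set.iUnion₂_subset h

theorem mem_cnUnion_take {L : List V} {i : ℕ} {x : V} :
    x ∈ cnUnion G (L.take i) ↔ ∃ s : Fin L.length, (s : ℕ) < i ∧ x ∈ cn G L[s] := by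
  simp only [cnUnion, Set.mem_iUnion, List.mem_take_iff_getElem, exists_prop]
  constructor
  · rintro ⟨_, ⟨s, hs, rfl⟩, hx⟩
    exact ⟨⟨s, by omega⟩, by simp; omega, hx⟩
  · rintro ⟨s, hs, hx⟩
    exact ⟨_, ⟨s, by omega, rfl⟩, hx⟩

/-- Legality of `L` when the vertices of `C` are already dominated; `L` need not dominate `G`. -/
def IsLegalFrom : Set V → List V → Prop
  | _, [] => True
  | C, v :: L => (cn G v \ C).Nonempty ∧ IsLegalFrom (C ∪ cn G v) L

variable {G}

theorem cn_subset_cnUnion_take {L : List V} {s t : Fin L.length} (h : s < t) :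
    cn G L[s] ⊆ cnUnion G (L.take t) :=
  fun _ hx => (mem_cnUnion_take G).mpr ⟨s, h, hx⟩

theorem exists_first_mem_cn {L : List V} {t : ℕ} {x : V} (hx : x ∈ cnUnion G (L.take t)) :
    ∃ s : Fin L.length, (s : ℕ) < t ∧ x ∈ cn G L[s] ∧ x ∉ cnUnion G (L.take s) := by
  obtain ⟨s, ⟨hst, hs⟩, hmin⟩ := WellFounded.has_min wellFounded_lt
    {s : Fin L.length | (s : ℕ) < t ∧ x ∈ cn G L[s]} ((mem_cnUnion_take G).mp hx)
  refine ⟨s, hst, hs, fun hx' => ?_⟩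
  obtain ⟨r, hrs, hr⟩ := (mem_cnUnion_take G).mp hx'
  exact hmin r ⟨hrs.trans hst, hr⟩ hrs

@[simp] theorem isLegalFrom_nil (C : Set V) : IsLegalFrom G C [] := trivial

@[simp] theorem isLegalFrom_cons {C : Set V} {v : V} {L : List V} :
    IsLegalFrom G C (v :: L) ↔ (cn G v \ C).Nonempty ∧ IsLegalFrom G (C ∪ cn G v) L := Iff.rfl

theorem isLegalFrom_append {C : Set V} {L₁ L₂ : List V} :
    IsLegalFrom G C (L₁ ++ L₂) ↔ IsLegalFrom G C L₁ ∧ IsLegalFrom G (C ∪ cnUnion G L₁) L₂ := by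
  induction L₁ generalizing C with
  | nil => simp
  | cons v L ih => simp [ih, Set.union_assoc, and_assoc]

theorem isLegalFrom_iff_get {C : Set V} {L : List V} :
    IsLegalFrom G C L ↔
      ∀ i : Fin L.length, (cn G L[i] \ (C ∪ cnUnion G (L.take i))).Nonempty := by
  induction L generalizing C with
  | nil => simp
  | cons v L ih =>
    rw [isLegalFrom_cons, ih]
    exact Iff.trans (by simp [Set.union_assoc]) (Fin.forall_fin_succ (n := L.length)).symm

theorem IsLegalFrom.nonempty_diff {C : Set V} {L : List V} (h : IsLegalFrom G C L) {v : V}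
    (hv : v ∈ L) : (cn G v \ C).Nonempty := by
  induction L generalizing C with
  | nil => simp at hv
  | cons u L ih =>
    rcases List.mem_cons.mp hv with rfl | hv
    · exact h.1
    · exact (ih h.2 hv).mono (Set.sdiff_subset_sdiff_right Set.subset_union_left)

theorem IsLegalFrom.nodup {C : Set V} {L : List V} (h : IsLegalFrom G C L) : L.Nodup := by
  induction L generalizing C with
  | nil => simp
  | cons v L ih =>
    refine List.nodup_cons.mpr ⟨fun hv => ?_, ih h.2⟩
    obtain ⟨x, hx, hxC⟩ := h.2.nonempty_diff hv
    exact hxC (Or.inr hx)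

theorem isLegal_iff {S : List V} :
    IsLegal G S ↔ IsLegalFrom G ∅ S ∧ cnUnion G S = Set.univ := by
  have hdom : (∀ v, ∃ u ∈ S, v ∈ cn G u) ↔ cnUnion G S = Set.univ := by
    simp [Set.eq_univ_iff_forall, cnUnion]
  have hleg : (∀ i : Fin S.length, (PN G S i (S.get i)).Nonempty) ↔ IsLegalFrom G ∅ S := by
    simp [isLegalFrom_iff_get, PN]
  rw [← hdom, ← hleg]
  exact ⟨fun h => ⟨h.legal, h.dominates⟩, fun h => ⟨(hleg.mp h.1).nodup, h.2, h.1⟩⟩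

theorem IsLegalFrom.concat {L : List V} (h : IsLegalFrom G ∅ L) {v : V}
    (hv : v ∉ cnUnion G L) : IsLegalFrom G ∅ (L ++ [v]) :=
  isLegalFrom_append.mpr ⟨h, by simpa using ⟨v, mem_cn_self G v, hv⟩⟩

theorem isLegalFrom_ofFn {C : Set V} {r : ℕ} (g : Fin r → V)
    (h : ∀ i, ∃ x ∈ cn G (g i), x ∉ C ∧ ∀ s < i, x ∉ cn G (g s)) :
    IsLegalFrom G C (List.ofFn g) := by
  induction r generalizing C with
  | zero => trivial
  | succ r ih =>
    rw [List.ofFn_succ]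
    obtain ⟨x, hx, hxC, -⟩ := h 0
    refine ⟨⟨x, hx, hxC⟩, ih _ fun i => ?_⟩
    obtain ⟨y, hy, hyC, hys⟩ := h i.succ
    refine ⟨y, hy, ?_, fun s hs => hys _ (Fin.succ_lt_succ_iff.mpr hs)⟩
    rintro (hyC' | hy0)
    · exact hyC hyC'
    · exact hys 0 (Fin.succ_pos i) hy0

variable {V' : Type*} {G' : SimpleGraph V'}

theorem preimage_cn (φ : G' ↪g G) (v : V') : φ ⁻¹' cn G (φ v) = cn G' v := by
  ext x
  simp [mem_cn_iff]

theorem preimage_cnUnion_map (φ : G' ↪g G) (L : List V') :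
    φ ⁻¹' cnUnion G (L.map φ) = cnUnion G' L := by
  induction L with
  | nil => simp
  | cons v L ih => simp [Set.preimage_union, preimage_cn, ih]

theorem IsLegalFrom.map (φ : G' ↪g G) {C : Set V} {C' : Set V'} {L : List V'}
    (h : IsLegalFrom G' C' L) (hC : φ ⁻¹' C ⊆ C') : IsLegalFrom G C (L.map φ) := by
  induction L generalizing C C' with
  | nil => trivial
  | cons v L ih =>
    obtain ⟨⟨x, hx, hxC⟩, hL⟩ := h
    refine ⟨⟨φ x, by rwa [← Set.mem_preimage, preimage_cn], fun h => hxC (hC h)⟩, ih hL ?_⟩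
    rw [Set.preimage_union, preimage_cn]
    exact Set.union_subset_union_left _ hC

end Legal

section Grundy

variable {V : Type*} [Fintype V] {G : SimpleGraph V}

theorem IsLegalFrom.exists_isLegal {L : List V} (h : IsLegalFrom G ∅ L) :
    ∃ S, IsLegal G S ∧ L.length ≤ S.length := by
  by_cases hdom : cnUnion G L = Set.univ
  · exact ⟨L, isLegal_iff.mpr ⟨h, hdom⟩, le_rfl⟩
  obtain ⟨v, hv⟩ : ∃ v, v ∉ cnUnion G L := by simpa [Set.eq_univ_iff_forall] using hdom
  have h' := h.concat hv
  have hcard := h'.nodup.length_le_card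
  obtain ⟨S, hS, hlen⟩ := h'.exists_isLegal
  exact ⟨S, hS, by simp at hlen; omega⟩
termination_by Fintype.card V - L.length
decreasing_by simp at hcard ⊢; omega

theorem bddAbove_legal_lengths : BddAbove {k | ∃ S : List V, IsLegal G S ∧ S.length = k} :=
  ⟨Fintype.card V, by rintro _ ⟨S, hS, rfl⟩; exact hS.nodup.length_le_card⟩

theorem IsLegal.length_le_gammaGr {S : List V} (h : IsLegal G S) : S.length ≤ gammaGr G :=
  le_csSup bddAbove_legal_lengths ⟨S, h, rfl⟩

theorem IsLegalFrom.length_le_gammaGr {L : List V} (h : IsLegalFrom G ∅ L) :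
    L.length ≤ gammaGr G :=
  let ⟨_, hS, hlen⟩ := h.exists_isLegal
  hlen.trans hS.length_le_gammaGr

theorem IsLegalFrom.length_lt_gammaGr {L : List V} (h : IsLegalFrom G ∅ L) {v : V}
    (hv : v ∉ cnUnion G L) : L.length < gammaGr G := by
  simpa using (h.concat hv).length_le_gammaGr

theorem exists_isLegal_length_eq_gammaGr : ∃ S, IsLegal G S ∧ S.length = gammaGr G := by
  obtain ⟨S, hS, -⟩ := (isLegalFrom_nil (G := G) ∅).exists_isLegal
  exact Nat.sSup_mem (s := {k | ∃ S : List V, IsLegal G S ∧ S.length = k}) ⟨_, S, hS, rfl⟩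
    bddAbove_legal_lengths

theorem gammaGr_pos [Nonempty V] : 0 < gammaGr G :=
  (isLegalFrom_nil ∅).length_lt_gammaGr (v := Classical.arbitrary V) (by simp)

end Grundy

section Lex

variable {V V' W : Type*} {G : SimpleGraph V} {G' : SimpleGraph V'} {H : SimpleGraph W}

theorem lex_adj {p q : V × W} :
    (Lex G H).Adj p q ↔ G.Adj p.1 q.1 ∨ (p.1 = q.1 ∧ H.Adj p.2 q.2) := Iff.rfl

theorem mem_cn_lex {p q : V × W} :
    q ∈ cn (Lex G H) p ↔ (q.1 = p.1 ∧ q.2 ∈ cn H p.2) ∨ G.Adj p.1 q.1 := by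
  obtain ⟨a, x⟩ := p
  obtain ⟨b, y⟩ := q
  simp only [mem_cn_iff, lex_adj, Prod.mk.injEq]
  constructor
  · rintro (⟨rfl, rfl⟩ | h | ⟨rfl, h⟩) <;> simp_all
  · rintro (⟨rfl, rfl | h⟩ | h) <;> simp_all

@[simp] theorem mk_mem_cn_lex_mk {c : V} {x y : W} :
    (c, x) ∈ cn (Lex G H) (c, y) ↔ x ∈ cn H y := by
  simp [mem_cn_lex]

theorem cn_lex_subset (p : V × W) : cn (Lex G H) p ⊆ Prod.fst ⁻¹' cn G p.1 := by
  intro q hq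
  rcases mem_cn_lex.mp hq with ⟨h, -⟩ | h
  · exact Or.inl h
  · exact Or.inr h

def lexColumn (G : SimpleGraph V) (H : SimpleGraph W) (c : V) : H ↪g Lex G H where
  toFun w := (c, w)
  inj' _ _ h := congrArg Prod.snd h
  map_rel_iff' {a b} := by
    show G.Adj c c ∨ (c = c ∧ H.Adj a b) ↔ H.Adj a b
    simp

def lexRow (G : SimpleGraph V) (H : SimpleGraph W) (w : W) : G ↪g Lex G H where
  toFun c := (c, w)
  inj' _ _ h := congrArg Prod.fst h
  map_rel_iff' {a b} := by
    show G.Adj a b ∨ (a = b ∧ H.Adj w w) ↔ G.Adj a b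
    simp

def lexMapLeft (H : SimpleGraph W) (φ : G' ↪g G) : Lex G' H ↪g Lex G H where
  toFun p := (φ p.1, p.2)
  inj' p q h := by
    simp only [Prod.mk.injEq] at h
    exact Prod.ext (φ.injective h.1) h.2
  map_rel_iff' {p q} := by
    show G.Adj (φ p.1) (φ q.1) ∨ (φ p.1 = φ q.1 ∧ H.Adj p.2 q.2) ↔
      G'.Adj p.1 q.1 ∨ (p.1 = q.1 ∧ H.Adj p.2 q.2)
    simp

@[simp] theorem lexColumn_apply (c : V) (w : W) : lexColumn G H c w = (c, w) := rfl

@[simp] theorem lexRow_apply (c : V) (w : W) : lexRow G H w c = (c, w) := rfl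

@[simp] theorem lexMapLeft_apply (φ : G' ↪g G) (p : V' × W) :
    lexMapLeft H φ p = (φ p.1, p.2) := rfl

theorem cnUnion_lex_subset {L : List (V × W)} {X : Set V} (h : ∀ p ∈ L, cn G p.1 ⊆ X) :
    cnUnion (Lex G H) L ⊆ Prod.fst ⁻¹' X :=
  cnUnion_subset _ fun p hp => (cn_lex_subset p).trans (Set.preimage_mono (h p hp))

theorem cnUnion_map_lexColumn_subset (c : V) (L : List W) :
    cnUnion (Lex G H) (L.map (lexColumn G H c)) ⊆ Prod.fst ⁻¹' cn G c :=
  cnUnion_lex_subset fun p hp => by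
    obtain ⟨w, -, rfl⟩ := List.mem_map.mp hp
    exact subset_rfl

theorem gammaGr_add_gammaGr_lex_le [Fintype V] [Fintype V'] [Fintype W] (φ : G' ↪g G) (c : V)
    (hc : ∀ a, φ a ∉ cn G c) : gammaGr H + gammaGr (Lex G' H) ≤ gammaGr (Lex G H) := by
  obtain ⟨SH, hSH, hSHlen⟩ := exists_isLegal_length_eq_gammaGr (G := H)
  obtain ⟨T, hT, hTlen⟩ := exists_isLegal_length_eq_gammaGr (G := Lex G' H)
  have hleg : IsLegalFrom (Lex G H) ∅ (SH.map (lexColumn G H c) ++ T.map (lexMapLeft H φ)) := by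
    refine isLegalFrom_append.mpr ⟨(isLegal_iff.mp hSH).1.map _ (by simp), ?_⟩
    refine (isLegal_iff.mp hT).1.map _ fun p hp => hc p.1 ?_
    simpa using cnUnion_map_lexColumn_subset c SH (by simpa using hp)
  simpa [← hSHlen, ← hTlen] using hleg.length_le_gammaGr

/-- The last vertex `v` still has a private neighbour `(c, x)` after `L`, and every vertex of a
column adjacent to `c` dominates it. -/
theorem isLegalFrom_lexColumn_append {L : List W} {v : W} (hL : IsLegalFrom H ∅ (L ++ [v]))
    {c c' : V} (hcc' : G.Adj c' c) (w : W) {C : Set (V × W)} (hC : C ⊆ Prod.fst ⁻¹' {c}ᶜ) :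
    IsLegalFrom (Lex G H) C (L.map (lexColumn G H c) ++ [(c', w)]) := by
  obtain ⟨hL, ⟨x, -, hx⟩, -⟩ := isLegalFrom_append.mp hL
  refine isLegalFrom_append.mpr ⟨hL.map _ fun y hy => (hC hy (Set.mem_singleton c)).elim, ?_⟩
  refine ⟨⟨(c, x), mem_cn_lex.mpr (Or.inr hcc'), ?_⟩, trivial⟩
  rintro (hxC | hxL)
  · exact hC hxC (Set.mem_singleton c)
  · have : x ∈ lexColumn G H c ⁻¹' cnUnion (Lex G H) (L.map (lexColumn G H c)) := hxL
    rw [preimage_cnUnion_map] at this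
    exact hx (by simpa using this)

end Lex

section PathPow

variable {n m : ℕ}

theorem pathPow_adj {i j : Fin n} :
    (pathPow n m).Adj i j ↔ (i : ℕ) ≠ j ∧ (i : ℕ) ≤ j + m ∧ (j : ℕ) ≤ i + m := by
  simp only [pathPow, ne_eq, Fin.ext_iff, Nat.dist]
  omega

theorem mem_cn_pathPow {i j : Fin n} :
    j ∈ cn (pathPow n m) i ↔ (i : ℕ) ≤ j + m ∧ (j : ℕ) ≤ i + m := by
  rw [mem_cn_iff, pathPow_adj, Fin.ext_iff]
  omega

def pathPowShift (n m s : ℕ) : pathPow n m ↪g pathPow (n + s) m where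
  toFun i := i.addNat s
  inj' _ _ h := by simpa using h
  map_rel_iff' {i j} := by
    show (pathPow (n + s) m).Adj (i.addNat s) (j.addNat s) ↔ _
    simp only [pathPow_adj, Fin.val_addNat]
    omega

@[simp] theorem pathPowShift_apply (s : ℕ) (i : Fin n) : pathPowShift n m s i = i.addNat s := rfl

variable (n m) in
def middleColumns : List (Fin n) := List.ofFn fun i : Fin (n - m - 2) => ⟨i + 1, by omega⟩

theorem isLegalFrom_middleColumns :
    IsLegalFrom (pathPow n m) {c | (c : ℕ) ≤ m} (middleColumns n m) :=
  isLegalFrom_ofFn _ fun i => ⟨⟨i + 1 + m, by omega⟩, by simp [mem_cn_pathPow]; omega,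
    by simp, fun s hs => by rw [Fin.lt_def] at hs; simp [mem_cn_pathPow]; omega⟩

theorem cn_subset_of_mem_middleColumns {c : Fin n} (hc : c ∈ middleColumns n m) :
    cn (pathPow n m) c ⊆ {c | (c : ℕ) ≤ n - 2} := by
  obtain ⟨i, rfl⟩ := List.mem_ofFn.mp hc
  intro d hd
  simp only [mem_cn_pathPow] at hd
  simp only [Set.mem_ofPred_eq]
  omega

variable {W : Type*} [Fintype W] {H : SimpleGraph W}

theorem gammaGr_add_gammaGr_lex_pathPow_le :
    gammaGr H + gammaGr (Lex (pathPow n m) H) ≤ gammaGr (Lex (pathPow (n + (m + 1)) m) H) :=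
  gammaGr_add_gammaGr_lex_le (pathPowShift n m (m + 1)) ⟨0, by omega⟩ fun i => by
    simp [mem_cn_pathPow]
    omega

variable [Nonempty W]

theorem two_mul_gammaGr_add_le_gammaGr_lex_pathPow (hm : 1 ≤ m) (hn : m + 2 ≤ n) :
    2 * gammaGr H + n ≤ gammaGr (Lex (pathPow n m) H) + m + 2 := by
  obtain ⟨SH, hSH, hSHlen⟩ := exists_isLegal_length_eq_gammaGr (G := H)
  have hSH0 : SH ≠ [] := by
    rintro rfl
    exact (gammaGr_pos (G := H)).ne' (by simpa using hSHlen.symm)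
  set w := Classical.arbitrary W
  set first := SH.map (lexColumn (pathPow n m) H ⟨0, by omega⟩) ++
    (middleColumns n m).map (lexRow (pathPow n m) H w)
  set last := SH.dropLast.map (lexColumn (pathPow n m) H ⟨n - 1, by omega⟩) ++
    [(⟨n - 2, by omega⟩, w)]
  have hfirst : IsLegalFrom (Lex (pathPow n m) H) ∅ first := by
    refine isLegalFrom_append.mpr ⟨(isLegal_iff.mp hSH).1.map _ (by simp), ?_⟩
    refine isLegalFrom_middleColumns.map _ fun c hc => ?_
    have := cnUnion_map_lexColumn_subset _ SH (by simpa using hc)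
    simpa [mem_cn_pathPow] using this
  have hcov : cnUnion (Lex (pathPow n m) H) first ⊆ Prod.fst ⁻¹' {c | (c : ℕ) ≤ n - 2} := by
    refine cnUnion_lex_subset fun p hp => ?_
    simp only [first, List.mem_append, List.mem_map, lexColumn_apply, lexRow_apply] at hp
    obtain ⟨_, -, rfl⟩ | ⟨c, hc, rfl⟩ := hp
    · exact fun d hd => by simp only [mem_cn_pathPow] at hd; simp only [Set.mem_ofPred_eq]; omega
    · exact cn_subset_of_mem_middleColumns hc
  have hlast : IsLegalFrom (Lex (pathPow n m) H)
      (∅ ∪ cnUnion (Lex (pathPow n m) H) first) last := by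
    refine isLegalFrom_lexColumn_append (v := SH.getLast hSH0) ?_ ?_ w fun p hp => ?_
    · rw [List.dropLast_append_getLast hSH0]
      exact (isLegal_iff.mp hSH).1
    · simp [pathPow_adj]
      omega
    · have := hcov (by simpa using hp)
      simp [Fin.ext_iff] at this ⊢
      omega
  have := (isLegalFrom_append.mpr ⟨hfirst, hlast⟩).length_le_gammaGr
  simp [first, last, middleColumns, hSHlen] at this
  omega

theorem le_gammaGr_lex_pathPow (hm : 1 ≤ m) (hn : m + 2 ≤ n) (hk : m + 1 ≤ gammaGr H) :
    (n + m) / (m + 1) * (gammaGr H - (m + 1)) + n + m ≤ gammaGr (Lex (pathPow n m) H) := by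
  induction n using Nat.strong_induction_on with
  | _ n ih =>
    by_cases hsmall : n ≤ 2 * m + 2
    · have hq : (n + m) / (m + 1) = 2 := Nat.div_eq_of_lt_le (by omega) (by omega)
      have := two_mul_gammaGr_add_le_gammaGr_lex_pathPow (H := H) hm hn
      rw [hq]
      omega
    · obtain ⟨n', rfl⟩ : ∃ n', n = n' + (m + 1) := ⟨n - (m + 1), by omega⟩
      have hq : (n' + (m + 1) + m) / (m + 1) = (n' + m) / (m + 1) + 1 := by
        rw [show n' + (m + 1) + m = n' + m + (m + 1) by ring, Nat.add_div_right _ (by omega)]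
      have := ih n' (by omega) (by omega)
      have := gammaGr_add_gammaGr_lex_pathPow_le (n := n') (m := m) (H := H)
      rw [hq, add_mul, one_mul]
      omega

end PathPow

section Footprints

variable {V W : Type*} {G : SimpleGraph V} {H : SimpleGraph W} {S : List (V × W)}

variable (G H S) in
/-- Pick `t` of `S` has a private neighbour in the column `{j} × W`. -/
def Footprints (t : Fin S.length) (j : V) : Prop :=
  ∃ x, (j, x) ∈ cn (Lex G H) S[t] ∧ (j, x) ∉ cnUnion (Lex G H) (S.take t)

variable (G H S) in
def Enters (t : Fin S.length) (j : V) : Prop := S[t].1 ≠ j ∧ Footprints G H S t j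

variable (G H S) in
def IsEntered (j : V) : Prop := ∃ t, Enters G H S t j

variable {s t t' : Fin S.length} {j : V}

theorem Footprints.not_adj (h : Footprints G H S t j) (hst : s < t) : ¬ G.Adj S[s].1 j := by
  obtain ⟨_, -, hx⟩ := h
  exact fun hs => hx (cn_subset_cnUnion_take hst (mem_cn_lex.mpr (Or.inr hs)))

theorem Footprints.le_of_adj (h : Footprints G H S t j) (hs : G.Adj S[s].1 j) : t ≤ s :=
  le_of_not_gt fun hst => h.not_adj hst hs

theorem Footprints.lt_of_adj (h : Footprints G H S t S[t].1) (hs : G.Adj S[s].1 S[t].1) :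
    t < s :=
  (h.le_of_adj hs).lt_of_ne fun hts => G.loopless.irrefl _ (hts ▸ hs)

theorem Enters.adj (h : Enters G H S t j) : G.Adj S[t].1 j := by
  obtain ⟨hj, x, hx, -⟩ := h
  exact (mem_cn_lex.mp hx).resolve_left fun h' => hj h'.1.symm

theorem Enters.eq (h : Enters G H S t j) (h' : Enters G H S t' j) : t = t' :=
  (h.2.le_of_adj h'.adj).antisymm (h'.2.le_of_adj h.adj)

/-- `S[t]` itself was dominated before `t`; the first pick dominating it does not lie in the
column of `S[t]`, as it would then dominate all of column `j` before `t`. -/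
theorem Enters.exists_adj_lt (h : Enters G H S t j) (hown : ¬ Footprints G H S t S[t].1) :
    ∃ s < t, G.Adj S[s].1 S[t].1 := by
  have hcov : S[t] ∈ cnUnion (Lex G H) (S.take t) := by
    by_contra hnot
    exact hown ⟨S[t].2, mem_cn_self _ _, hnot⟩
  obtain ⟨s, hst, hs, -⟩ := exists_first_mem_cn hcov
  refine ⟨s, hst, (mem_cn_lex.mp hs).resolve_left fun hcol => h.2.not_adj hst ?_⟩
  rw [← hcol.1]
  exact h.adj

theorem IsLegal.exists_footprints (hS : IsLegal (Lex G H) S) (t : Fin S.length) :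
    ∃ j, Footprints G H S t j := by
  obtain ⟨⟨j, x⟩, hx, hx'⟩ := hS.legal t
  exact ⟨j, x, by simpa using hx, hx'⟩

theorem IsLegal.exists_footprints_column [Nonempty W] (hS : IsLegal (Lex G H) S) (j : V) :
    ∃ t, Footprints G H S t j := by
  have hx : (j, Classical.arbitrary W) ∈ cnUnion (Lex G H) (S.take S.length) := by
    rw [List.take_length, (isLegal_iff.mp hS).2]
    trivial
  obtain ⟨t, -, hx, hx'⟩ := exists_first_mem_cn hx
  exact ⟨t, _, hx, hx'⟩

open scoped Classical in
/-- The picks of column `j` footprinting their own column, read as a sequence of `H`. -/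
theorem exists_isLegalFrom_ownFootprints (j : V) :
    ∃ L : List W, IsLegalFrom H ∅ L ∧
      L.length = #(univ.filter fun t => S[t].1 = j ∧ Footprints G H S t j) ∧
      (IsEntered G H S j → ∃ x, x ∉ cnUnion H L) := by
  set I := univ.filter fun t => S[t].1 = j ∧ Footprints G H S t j
  set e := I.orderEmbOfFin rfl
  have hmem (i) : S[e i].1 = j ∧ Footprints G H S (e i) j := by
    have := I.orderEmbOfFin_mem rfl i
    simp only [I, mem_filter, mem_univ, true_and] at this
    exact this
  have hcol (i) : S[e i] = (j, S[e i].2) := Prod.ext (hmem i).1 rfl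
  refine ⟨List.ofFn fun i => S[e i].2, isLegalFrom_ofFn _ fun i => ?_, by simp, ?_⟩
  · obtain ⟨x, hx, hx'⟩ := (hmem i).2
    rw [hcol] at hx
    refine ⟨x, by simpa using hx, id, fun s hs hxs => hx' ?_⟩
    refine cn_subset_cnUnion_take (e.strictMono hs) ?_
    rw [hcol]
    simpa using hxs
  · rintro ⟨t, ht, x, hx, hx'⟩
    refine ⟨x, fun hxL => ?_⟩
    obtain ⟨_, hy, hxi⟩ := (mem_cnUnion H).mp hxL
    obtain ⟨i, rfl⟩ := List.mem_ofFn.mp hy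
    have hxi' : (j, x) ∈ cn (Lex G H) S[e i] := by
      rw [hcol]
      simpa using hxi
    rcases lt_trichotomy (e i) t with hlt | heq | hgt
    · exact hx' (cn_subset_cnUnion_take hlt hxi')
    · exact ht (heq ▸ (hmem i).1)
    · exact (hmem i).2.not_adj hgt (Enters.adj ⟨ht, x, hx, hx'⟩)

end Footprints

section Columns

open scoped Classical

variable {V W : Type*} [Fintype V] {G : SimpleGraph V} {H : SimpleGraph W} {S : List (V × W)}

variable (G H S) in
noncomputable def innerColumns : Finset V :=
  univ.filter fun j => ∃ t, S[t].1 = j ∧ Footprints G H S t j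

variable (G H S) in
noncomputable def innerEnteredColumns : Finset V :=
  univ.filter fun j => ∃ t, Enters G H S t j ∧ Footprints G H S t S[t].1

theorem mem_innerColumns {j : V} :
    j ∈ innerColumns G H S ↔ ∃ t, S[t].1 = j ∧ Footprints G H S t j := by
  simp [innerColumns]

theorem card_innerPicks_add_le [Fintype W] :
    #(univ.filter fun t => Footprints G H S t S[t].1) +
        #((innerColumns G H S).filter (IsEntered G H S)) ≤
      gammaGr H * #(innerColumns G H S) := by
  rw [card_eq_sum_card_fiberwise (f := fun t : Fin S.length => S[t].1) (t := innerColumns G H S)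
      fun t ht => mem_innerColumns.mpr ⟨t, rfl, (mem_filter.mp ht).2⟩,
    card_filter, ← sum_add_distrib, mul_comm, ← smul_eq_mul, ← sum_const]
  refine sum_le_sum fun j _ => ?_
  obtain ⟨L, hL, hlen, hent⟩ := exists_isLegalFrom_ownFootprints (G := G) (H := H) (S := S) j
  have hfilter : (univ.filter fun t => Footprints G H S t S[t].1).filter (fun t => S[t].1 = j) =
      univ.filter fun t => S[t].1 = j ∧ Footprints G H S t j := by
    ext t
    simp only [mem_filter, mem_univ, true_and]
    constructor
    · rintro ⟨h, hj⟩
      exact ⟨hj, hj ▸ h⟩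
    · rintro ⟨hj, h⟩
      exact ⟨hj ▸ h, hj⟩
  rw [hfilter, ← hlen]
  split_ifs with h
  · obtain ⟨x, hx⟩ := hent h
    exact hL.length_lt_gammaGr hx
  · simpa using hL.length_le_gammaGr

/-- A pick that footprints no vertex of its own column enters some column, which is then
neither unentered nor in `innerEnteredColumns`, and it is the only pick entering that column. -/
theorem IsLegal.card_outerPicks_add_le (hS : IsLegal (Lex G H) S) :
    #(univ.filter fun t => ¬ Footprints G H S t S[t].1) + #(innerEnteredColumns G H S) +
        #(univ.filter fun j => ¬ IsEntered G H S j) ≤ Fintype.card V := by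
  set A := innerEnteredColumns G H S
  set Z := univ.filter fun j => ¬ IsEntered G H S j
  set entering := fun j => univ.filter fun t => Enters G H S t j
  have hdisj : Disjoint A Z := by
    simp only [A, Z, innerEnteredColumns, disjoint_filter]
    rintro j - ⟨t, ht, -⟩ hZ
    exact hZ ⟨t, ht⟩
  have hsub : univ.filter (fun t => ¬ Footprints G H S t S[t].1) ⊆ (A ∪ Z)ᶜ.biUnion entering := by
    intro t ht
    simp only [mem_filter, mem_univ, true_and] at ht
    obtain ⟨j, hj⟩ := hS.exists_footprints t
    have hne : S[t].1 ≠ j := fun h => ht (h ▸ hj)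
    simp only [mem_biUnion, mem_compl, mem_union, not_or]
    refine ⟨j, ⟨?_, ?_⟩, by simpa [entering] using ⟨hne, hj⟩⟩
    · simp only [A, innerEnteredColumns, mem_filter, mem_univ, true_and, not_exists, not_and]
      intro t' ht' hown
      exact ht (ht'.eq ⟨hne, hj⟩ ▸ hown)
    · simpa [Z, IsEntered] using ⟨t, hne, hj⟩
  have hone (j) : #(entering j) ≤ 1 := card_le_one.mpr fun t ht t' ht' => by
    simp only [entering, mem_filter, mem_univ, true_and] at ht ht'
    exact ht.eq ht'
  have hcard := (card_le_card hsub).trans (card_biUnion_le.trans (sum_le_sum fun j _ => hone j))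
  rw [sum_const, smul_eq_mul, mul_one, card_compl, card_union_of_disjoint hdisj] at hcard
  have : #A + #Z ≤ Fintype.card V := by
    rw [← card_union_of_disjoint hdisj]
    exact card_le_univ _
  omega

theorem IsLegal.length_add_card_le [Fintype W] (hS : IsLegal (Lex G H) S) :
    S.length + #(innerColumns G H S) + #(innerEnteredColumns G H S) ≤
      gammaGr H * #(innerColumns G H S) + Fintype.card V := by
  have hinner := card_innerPicks_add_le (G := G) (H := H) (S := S)
  have houter := hS.card_outerPicks_add_le
  have hpicks := card_filter_add_card_filter_not (s := univ) fun t => Footprints G H S t S[t].1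
  have hD := card_filter_add_card_filter_not (s := innerColumns G H S) (IsEntered G H S)
  have hDZ := card_le_card (filter_subset_filter (fun j => ¬ IsEntered G H S j)
    (subset_univ (innerColumns G H S)))
  simp only [card_univ, Fintype.card_fin] at hpicks
  omega

theorem not_adj_of_mem_innerColumns {j j' : V} (hj : j ∈ innerColumns G H S)
    (hj' : j' ∈ innerColumns G H S) : ¬ G.Adj j j' := by
  obtain ⟨t, rfl, ht⟩ := mem_innerColumns.mp hj
  obtain ⟨t', rfl, ht'⟩ := mem_innerColumns.mp hj'
  exact fun hadj => (ht.lt_of_adj hadj.symm).not_gt (ht'.lt_of_adj hadj)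

theorem IsLegal.isEntered [Nonempty W] (hS : IsLegal (Lex G H) S) {j : V}
    (hj : j ∉ innerColumns G H S) : IsEntered G H S j := by
  obtain ⟨t, ht⟩ := hS.exists_footprints_column j
  exact ⟨t, fun h => hj (mem_innerColumns.mpr ⟨t, h, ht⟩), ht⟩

variable (G H S) in
def IsFirstEntry (Γ : Finset V) (c : V) (θ : Fin S.length) : Prop :=
  c ∈ Γ ∧ Enters G H S θ c ∧ ∀ b ∈ Γ, ∀ t, Enters G H S t b → θ ≤ t

variable {Γ : Finset V}

theorem IsLegal.exists_isFirstEntry [Nonempty W] (hS : IsLegal (Lex G H) S) (hΓ : Γ.Nonempty)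
    (hΓD : ∀ b ∈ Γ, b ∉ innerColumns G H S) : ∃ c θ, IsFirstEntry G H S Γ c θ := by
  set T := univ.filter fun t => ∃ b ∈ Γ, Enters G H S t b
  obtain ⟨b, hb⟩ := hΓ
  obtain ⟨t, ht⟩ := hS.isEntered (hΓD b hb)
  have hT : T.Nonempty := ⟨t, by simpa [T] using ⟨b, hb, ht⟩⟩
  obtain ⟨c, hc, hθc⟩ := (mem_filter.mp (T.min'_mem hT)).2
  exact ⟨c, T.min' hT, hc, hθc, fun b hb t ht => T.min'_le t (by simpa [T] using ⟨b, hb, ht⟩)⟩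

variable {c : V} {θ : Fin S.length}

theorem IsFirstEntry.not_adj_of_mem_innerColumns (h : IsFirstEntry G H S Γ c θ) {j : V}
    (hj : j ∈ innerColumns G H S) (hθj : G.Adj S[θ].1 j) : ¬ G.Adj j c := by
  obtain ⟨t, rfl, ht⟩ := mem_innerColumns.mp hj
  exact fun hjc => (ht.lt_of_adj hθj).not_ge (h.2.1.2.le_of_adj hjc)

theorem IsFirstEntry.footprints_own (h : IsFirstEntry G H S Γ c θ)
    (hθ : S[θ].1 ∈ innerColumns G H S) : Footprints G H S θ S[θ].1 := by
  by_contra hown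
  obtain ⟨s, hsθ, hs⟩ := h.2.1.exists_adj_lt hown
  obtain ⟨t, ht, hfp⟩ := mem_innerColumns.mp hθ
  rw [← ht] at hfp hs
  have hts : t < s := hfp.lt_of_adj hs
  have hθt : θ ≤ t := h.2.1.2.le_of_adj (by rw [ht]; exact h.2.1.adj)
  exact (hθt.trans_lt (hts.trans hsθ)).false

theorem IsFirstEntry.col_not_mem [Nonempty W] (hS : IsLegal (Lex G H) S)
    (hΓD : ∀ b ∈ Γ, b ∉ innerColumns G H S) (h : IsFirstEntry G H S Γ c θ) : S[θ].1 ∉ Γ := by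
  intro hθ
  have hown : ¬ Footprints G H S θ S[θ].1 := fun hown =>
    hΓD _ hθ (mem_innerColumns.mpr ⟨θ, rfl, hown⟩)
  obtain ⟨s, hsθ, hs⟩ := h.2.1.exists_adj_lt hown
  obtain ⟨t, ht⟩ := hS.isEntered (hΓD _ hθ)
  exact ((h.2.2 _ hθ t ht).trans (ht.2.le_of_adj hs)).not_gt hsθ

theorem IsFirstEntry.mem_innerEnteredColumns [Nonempty W] (hS : IsLegal (Lex G H) S)
    (hΓD : ∀ b ∈ Γ, b ∉ innerColumns G H S) (h : IsFirstEntry G H S Γ c θ)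
    (hown : Footprints G H S θ S[θ].1) {b : V} (hb : b ∈ Γ) (hθb : G.Adj S[θ].1 b) :
    b ∈ innerEnteredColumns G H S := by
  obtain ⟨t, ht⟩ := hS.isEntered (hΓD b hb)
  have htθ : t = θ := (ht.2.le_of_adj hθb).antisymm (h.2.2 b hb t ht)
  simpa [innerEnteredColumns] using ⟨θ, htθ ▸ ht, hown⟩

end Columns

end GrundyDom

theorem Finset.card_sub_one_mul_le_card_filter_of_gaps {α : Type*} [LinearOrder α]
    {D A : Finset α} {m : ℕ}
    (h : ∀ j ∈ D, ∀ j' ∈ D, j < j' → (∀ c ∈ D, ¬ (j < c ∧ c < j')) →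
      m ≤ #(A.filter fun a => j < a ∧ a < j')) :
    (#D - 1) * m ≤ #(A.filter fun a => ∃ d ∈ D, a < d) := by
  classical
  induction D using Finset.induction_on_max with
  | empty => simp
  | insert a D hlt ih =>
    rcases D.eq_empty_or_nonempty with rfl | hne
    · simp
    have hD := ih fun j hj j' hj' hjj' hc => h j (mem_insert_of_mem hj) j' (mem_insert_of_mem hj')
      hjj' fun c hc' => by
        rcases mem_insert.mp hc' with rfl | hc'
        · exact fun hcc => (hlt j' hj').not_gt hcc.2
        · exact hc c hc'
    set j := D.max' hne
    have hgap := h j (mem_insert_of_mem (D.max'_mem hne)) a (mem_insert_self a D)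
      (hlt j (D.max'_mem hne)) fun c hc hcc => by
        rcases mem_insert.mp hc with rfl | hc
        · exact hcc.2.false
        · exact (D.le_max' c hc).not_gt hcc.1
    have hdisj : Disjoint (A.filter fun x => ∃ d ∈ D, x < d) (A.filter fun x => j < x ∧ x < a) :=
      disjoint_filter.mpr fun x _ ⟨d, hd, hxd⟩ hx => (hxd.trans_le (D.le_max' d hd)).not_gt hx.1
    have hsub : (A.filter fun x => ∃ d ∈ D, x < d) ∪ (A.filter fun x => j < x ∧ x < a) ⊆
        A.filter fun x => ∃ d ∈ insert a D, x < d := by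
      intro x hx
      simp only [mem_union, mem_filter, mem_insert] at hx ⊢
      rcases hx with ⟨hx, d, hd, hxd⟩ | ⟨hx, -, hxa⟩
      · exact ⟨hx, d, Or.inr hd, hxd⟩
      · exact ⟨hx, a, Or.inl rfl, hxa⟩
    have hcard := card_le_card hsub
    rw [card_union_of_disjoint hdisj] at hcard
    rw [card_insert_of_notMem fun ha => (hlt a ha).false, Nat.add_sub_cancel]
    obtain ⟨d, hd⟩ := Nat.exists_eq_add_of_lt (card_pos.mpr hne)
    rw [hd] at hD ⊢
    simp only [zero_add, Nat.add_sub_cancel] at hD ⊢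
    rw [add_mul, one_mul]
    omega
theorem Finset.card_sub_one_mul_le_of_gaps {α : Type*} [LinearOrder α] {D A : Finset α} {m : ℕ}
    (h : ∀ j ∈ D, ∀ j' ∈ D, j < j' → (∀ c ∈ D, ¬ (j < c ∧ c < j')) →
      m ≤ #(A.filter fun a => j < a ∧ a < j')) :
    (#D - 1) * m ≤ #A :=
  (card_sub_one_mul_le_card_filter_of_gaps h).trans (card_filter_le _ _)

namespace GrundyDom

section PathPowColumns

open scoped Classical

variable {n m : ℕ}

theorem card_mul_le_of_pathPow_not_adj {D : Finset (Fin n)}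
    (hD : ∀ i ∈ D, ∀ j ∈ D, ¬ (pathPow n m).Adj i j) : #D * (m + 1) ≤ n + m := by
  have hdisj : (D : Set (Fin n)).PairwiseDisjoint fun i => Ico (i : ℕ) (i + m + 1) := by
    intro i hi j hj hij
    have := hD i hi j hj
    rw [pathPow_adj] at this
    rw [Function.onFun, disjoint_left]
    intro a ha hb
    simp only [mem_Ico] at ha hb
    exact this ⟨Fin.val_ne_of_ne hij, by omega, by omega⟩
  have hcard (i : Fin n) : #(Ico (i : ℕ) (i + m + 1)) = m + 1 := by
    simp only [Nat.card_Ico]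
    omega
  calc #D * (m + 1) = #(D.biUnion fun i => Ico (i : ℕ) (i + m + 1)) := by
        rw [card_biUnion hdisj, sum_congr rfl fun i _ => hcard i]
        simp
    _ ≤ #(range (n + m)) := card_le_card fun a ha => by
        simp only [mem_biUnion, mem_Ico, mem_range] at ha ⊢
        obtain ⟨i, -, h⟩ := ha
        omega
    _ = n + m := card_range _

theorem le_card_filter_pathPow_adj {x : Fin n} {lo hi : ℕ} (hlo : lo ≤ x) (hhi : (x : ℕ) ≤ hi)
    (hn : hi < n) (hm : lo + m ≤ hi) :
    m ≤ #(univ.filter fun b : Fin n => lo ≤ b ∧ (b : ℕ) ≤ hi ∧ (pathPow n m).Adj x b) := by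
  set T := (Icc (max lo (x - m)) (min hi (x + m))).erase (x : ℕ)
  have hT : ∀ b ∈ T, b < n := fun b hb => by
    simp only [T, mem_erase, mem_Icc] at hb
    omega
  calc m ≤ #T := by
        rw [card_erase_of_mem (by simp; omega), Nat.card_Icc]
        omega
    _ = #(T.attachFin hT) := (card_attachFin T hT).symm
    _ ≤ _ := card_le_card fun b hb => by
        simp only [T, mem_attachFin, mem_erase, mem_Icc] at hb
        simp only [mem_filter, mem_univ, true_and, pathPow_adj]
        omega

end PathPowColumns

section UpperBound

open scoped Classical

variable {n m : ℕ} {W : Type*} [Nonempty W] {H : SimpleGraph W} {S : List (Fin n × W)}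

theorem IsLegal.le_card_innerEnteredColumns_between (hm : 1 ≤ m)
    (hS : IsLegal (Lex (pathPow n m) H) S) {j j' : Fin n} (hj : j ∈ innerColumns (pathPow n m) H S)
    (hj' : j' ∈ innerColumns (pathPow n m) H S) (hjj' : j < j') (hgap : ∀ c ∈ innerColumns (pathPow n m) H S, ¬ (j < c ∧ c < j')) :
    m ≤ #((innerEnteredColumns (pathPow n m) H S).filter fun a => j < a ∧ a < j') := by
  have hsep := not_adj_of_mem_innerColumns hj hj'
  rw [pathPow_adj] at hsep
  rw [Fin.lt_def] at hjj'
  set Γ := univ.filter fun b : Fin n => j < b ∧ b < j'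
  have hmemΓ {b : Fin n} : b ∈ Γ ↔ (j : ℕ) < b ∧ (b : ℕ) < j' := by
    simp only [Γ, mem_filter, mem_univ, true_and, Fin.lt_def]
  have hΓD : ∀ b ∈ Γ, b ∉ innerColumns (pathPow n m) H S := fun b hb hbD =>
    hgap b hbD (by simpa [Γ] using hb)
  have hΓ : Γ.Nonempty := ⟨⟨j + 1, by have := j'.isLt; omega⟩, hmemΓ.mpr (by simp only; omega)⟩
  obtain ⟨c, θ, hfe⟩ := hS.exists_isFirstEntry hΓ hΓD
  have hθΓ := hfe.col_not_mem hS hΓD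
  have hθc := pathPow_adj.mp hfe.2.1.adj
  have hc := hmemΓ.mp hfe.1
  rw [hmemΓ] at hθΓ
  -- Beyond `j`, the pick `θ` would come after the inner pick of `j`, which also enters `c`.
  have hθ : (S[θ].1 : ℕ) = j ∨ (S[θ].1 : ℕ) = j' := by
    by_cases hxj : (S[θ].1 : ℕ) < j
    · exact absurd (pathPow_adj.mpr (by omega))
        (hfe.not_adj_of_mem_innerColumns hj (pathPow_adj.mpr (by omega)))
    by_cases hxj' : (j' : ℕ) < S[θ].1
    · exact absurd (pathPow_adj.mpr (by omega))
        (hfe.not_adj_of_mem_innerColumns hj' (pathPow_adj.mpr (by omega)))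
    omega
  have hown := hfe.footprints_own (by rcases hθ with h | h <;> rwa [Fin.ext h])
  refine (le_card_filter_pathPow_adj (x := S[θ].1) (lo := j) (hi := j') (by omega) (by omega)
    j'.isLt (by omega)).trans (card_le_card fun b hb => ?_)
  simp only [mem_filter, mem_univ, true_and] at hb
  obtain ⟨hjb, hbj', hadj⟩ := hb
  have hbΓ : b ∈ Γ := hmemΓ.mpr (by rw [pathPow_adj] at hadj; omega)
  exact mem_filter.mpr ⟨hfe.mem_innerEnteredColumns hS hΓD hown hbΓ hadj, by simpa [Γ] using hbΓ⟩

theorem IsLegal.le_card_innerEnteredColumns (hm : 1 ≤ m) (hn : m + 2 ≤ n)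
    (hS : IsLegal (Lex (pathPow n m) H) S) : m ≤ #(innerEnteredColumns (pathPow n m) H S) := by
  set D := innerColumns (pathPow n m) H S
  set Γ := univ.filter fun b => b ∉ D
  have hΓD : ∀ b ∈ Γ, b ∉ D := fun b hb => (mem_filter.mp hb).2
  have hΓ : Γ.Nonempty := by
    by_contra h
    have hall (b : Fin n) : b ∈ D := by
      by_contra hb
      exact h ⟨b, mem_filter.mpr ⟨mem_univ _, hb⟩⟩
    exact not_adj_of_mem_innerColumns (hall ⟨0, by omega⟩) (hall ⟨1, by omega⟩)
      (pathPow_adj.mpr (by simp only; omega))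
  obtain ⟨c, θ, hfe⟩ := hS.exists_isFirstEntry hΓ hΓD
  have hθD : S[θ].1 ∈ D := by simpa [Γ] using hfe.col_not_mem hS hΓD
  have hown := hfe.footprints_own hθD
  refine (le_card_filter_pathPow_adj (x := S[θ].1) (lo := 0) (hi := n - 1) (by omega)
    (by have := S[θ].1.isLt; omega) (by omega) (by omega)).trans (card_le_card fun b hb => ?_)
  simp only [mem_filter, mem_univ, true_and] at hb
  exact hfe.mem_innerEnteredColumns hS hΓD hown
    (mem_filter.mpr ⟨mem_univ _, fun hbD => not_adj_of_mem_innerColumns hθD hbD hb.2.2⟩) hb.2.2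

variable [Fintype W]

/-- The counting bound with `d` inner columns and `a` columns entered by an inner pick. -/
theorem exists_gammaGr_lex_pathPow_bounds (hm : 1 ≤ m) (hn : m + 2 ≤ n) :
    ∃ d a : ℕ, gammaGr (Lex (pathPow n m) H) + d + a ≤ gammaGr H * d + n ∧
      d * (m + 1) ≤ n + m ∧ (d - 1) * m ≤ a ∧ m ≤ a := by
  obtain ⟨S, hS, hlen⟩ := exists_isLegal_length_eq_gammaGr (G := Lex (pathPow n m) H)
  refine ⟨#(innerColumns _ H S), #(innerEnteredColumns _ H S), ?_,
    card_mul_le_of_pathPow_not_adj fun i hi j hj => not_adj_of_mem_innerColumns hi hj,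
    Finset.card_sub_one_mul_le_of_gaps fun j hj j' hj' hjj' hgap =>
      hS.le_card_innerEnteredColumns_between hm hj hj' hjj' hgap,
    hS.le_card_innerEnteredColumns hm hn⟩
  simpa [hlen] using hS.length_add_card_le

theorem gammaGr_lex_pathPow_le (hm : 1 ≤ m) (hn : m + 2 ≤ n) (hk : m + 1 ≤ gammaGr H) :
    gammaGr (Lex (pathPow n m) H) ≤ (n + m) / (m + 1) * (gammaGr H - (m + 1)) + n + m := by
  obtain ⟨d, a, hcount, hd, hda, hma⟩ := exists_gammaGr_lex_pathPow_bounds (H := H) hm hn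
  have hdq : d ≤ (n + m) / (m + 1) := (Nat.le_div_iff_mul_le (by omega)).mpr hd
  obtain ⟨k, hk⟩ := Nat.exists_eq_add_of_le' hk
  rw [hk, Nat.add_sub_cancel]
  rw [hk] at hcount
  have := Nat.mul_le_mul_right k hdq
  rcases d with _ | e
  · omega
  · simp only [Nat.add_sub_cancel] at hda
    nlinarith

theorem gammaGr_lex_pathPow_add_le (hm : 1 ≤ m) (hn : m + 2 ≤ n) (hk : gammaGr H ≤ m) :
    gammaGr (Lex (pathPow n m) H) + m + 2 ≤ 2 * gammaGr H + n := by
  obtain ⟨d, a, hcount, -, hda, hma⟩ := exists_gammaGr_lex_pathPow_bounds (H := H) hm hn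
  have hk0 : 0 < gammaGr H := gammaGr_pos
  rcases d with _ | _ | e
  · omega
  · omega
  · simp only [Nat.add_sub_cancel] at hda
    nlinarith [Nat.mul_le_mul_right e hk]

end UpperBound

end GrundyDom

open GrundyDom Finset

-- `⌈n/(m+1)⌉` is written `(n + m) / (m + 1)`.
/-- formulas for `γ_gr(P_n^m ∘ H)` according to whether
`γ_gr(H) ≥ m+1` or `γ_gr(H) ≤ m`; here `⌈n/(m+1)⌉ = (n+m)/(m+1)` in ℕ. -/
theorem stmt14 (n m : ℕ) (hm : 1 ≤ m) (hn : m + 2 ≤ n)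
    {W : Type*} [Fintype W] [Nonempty W] (H : SimpleGraph W) :
    (m + 1 ≤ gammaGr H →
      (gammaGr (Lex (pathPow n m) H) : ℤ) =
        (((n + m) / (m + 1) : ℕ) : ℤ) * ((gammaGr H : ℤ) - (m + 1)) + n + m) ∧
    (gammaGr H ≤ m →
      (gammaGr (Lex (pathPow n m) H) : ℤ) =
        2 * (gammaGr H : ℤ) + n - m - 2) := by
  refine ⟨fun hk => ?_, fun hk => ?_⟩
  · rw [(gammaGr_lex_pathPow_le hm hn hk).antisymm (le_gammaGr_lex_pathPow hm hn hk)]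
    push_cast [Nat.cast_sub hk]
    ring
  · have := gammaGr_lex_pathPow_add_le (H := H) hm hn hk
    have := two_mul_gammaGr_add_le_gammaGr_lex_pathPow (H := H) hm hn
    omega
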